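/- For 0 < σ < π and real s > 1, η_CB(s; sin(σ/2)) = (π/Γ(s−1)) ∫_0^σ (−2 log(sin(θ/2)/sin(σ/2)))^{s−2} dθ, where η_CB(s;z) = Σ_{m=0}^∞ (2z)^{2m+1}/(binom(2m+1,m+1/2)(m+1/2)^s) with binom(2m+1,m+1/2) = Γ(2m+2)/Γ(m+3/2)². -/

import Mathlib

/-!
With `z = sin (σ / 2)`, the substitution `θ = 2 arcsin (z e^{-u/2})` turns the right-hand integral
into `∫_0^∞ u^{s-2} z e^{-u/2} / √(1 - z² e^{-u}) du`. Expanding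
`1 / √(1 - x) = ∑ Γ(m + 1/2) / (√π m!) xᵐ` and integrating termwise against
`u^{s-2} e^{-(m+1/2) u}` (Tonelli, all terms being nonnegative) produces
`Γ(s - 1) ∑ Γ(m + 1/2) / (√π m!) z^{2m+1} (m + 1/2)^{1-s}`, and the duplication formula for
`Γ` identifies these coefficients with `2^{2m+1} / (π (m + 1/2) binom(2m+1, m+1/2))`.
-/

/-- The half-integer binomial coefficient `binom(2m+1, m+1/2) = Γ(2m+2)/Γ(m+3/2)²`. -/
noncomputable def halfBinom (m : ℕ) : ℝ :=
  Real.Gamma (2 * m + 2) / (Real.Gamma ((m : ℝ) + 3 / 2)) ^ 2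

open Real MeasureTheory Set

theorem Real.Gamma_add_nat_eq_ascPochhammer_eval_mul {x : ℝ} (hx : 0 < x) (n : ℕ) :
    Gamma (x + n) = (ascPochhammer ℝ n).eval x * Gamma x := by
  induction n with
  | zero => simp
  | succ n ih =>
    rw [Nat.cast_succ, ← add_assoc, Gamma_add_one (by positivity), ih, ascPochhammer_succ_eval]
    ring

theorem Ring.choose_natCast_sub_half (n : ℕ) :
    Ring.choose ((n : ℝ) - 1 / 2) n = Gamma (n + 1 / 2) / (√π * n.factorial) := by
  have hpoch := Gamma_add_nat_eq_ascPochhammer_eval_mul (x := 1 / 2) (by norm_num) n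
  rw [Gamma_one_half_eq, add_comm] at hpoch
  rw [Ring.choose_eq_smul, Polynomial.descPochhammer_smeval_eq_ascPochhammer,
    Polynomial.ascPochhammer_smeval_eq_eval, hpoch, smul_eq_mul]
  have : (0 : ℝ) < √π := by positivity
  field_simp
  ring_nf

theorem Real.Gamma_two_mul_nat_add_one (m : ℕ) :
    Gamma (2 * m + 1) = 2 ^ (2 * m) * m.factorial * Gamma (m + 1 / 2) / √π := by
  have hdup := Gamma_mul_Gamma_add_half ((m : ℝ) + 1 / 2)
  rw [show (m : ℝ) + 1 / 2 + 1 / 2 = m + 1 by ring, Gamma_nat_eq_factorial,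
    show 2 * ((m : ℝ) + 1 / 2) = 2 * m + 1 by ring,
    show 1 - (2 * (m : ℝ) + 1) = -((2 * m : ℕ) : ℝ) by push_cast; ring,
    rpow_neg zero_le_two, rpow_natCast] at hdup
  have hinv : (2 : ℝ) ^ (2 * m) * ((2 : ℝ) ^ (2 * m))⁻¹ = 1 :=
    mul_inv_cancel₀ (by positivity)
  rw [eq_div_iff (by positivity)]
  linear_combination -(2 : ℝ) ^ (2 * m) * hdup - Gamma (2 * m + 1) * √π * hinv

theorem halfBinom_eq (m : ℕ) :
    halfBinom m = 2 ^ (2 * m + 1) * m.factorial / (√π * (m + 1 / 2) * Gamma (m + 1 / 2)) := by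
  have hm : (0 : ℝ) < m + 1 / 2 := by positivity
  have hΓ : 0 < Gamma (m + 1 / 2) := Gamma_pos_of_pos hm
  rw [halfBinom, show (2 : ℝ) * m + 2 = 2 * m + 1 + 1 by ring, Gamma_add_one (by positivity),
    Gamma_two_mul_nat_add_one, show (m : ℝ) + 3 / 2 = m + 1 / 2 + 1 by ring,
    Gamma_add_one hm.ne']
  field_simp
  ring

theorem hasSum_Gamma_add_half_mul_pow {x : ℝ} (hx : |x| < 1) :
    HasSum (fun n : ℕ => Gamma (n + 1 / 2) / (√π * n.factorial) * x ^ n)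
      (√(1 - x))⁻¹ := by
  have h := (one_div_one_sub_rpow_hasFPowerSeriesOnBall_zero (1 / 2)).hasSum
    (y := x) (by simpa [enorm_eq_nnnorm, ← NNReal.coe_lt_coe] using hx)
  have hc (n : ℕ) : (1 / 2 + n - 1 : ℝ) = n - 1 / 2 := by ring
  simp only [FormalMultilinearSeries.ofScalars_apply_eq, zero_add, smul_eq_mul, hc,
    Ring.choose_natCast_sub_half, ← sqrt_eq_rpow] at h
  rwa [inv_eq_one_div]

theorem hasSum_Gamma_add_half_mul_exp {z u : ℝ} (hz : |z| < 1) (hu : 0 ≤ u) :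
    HasSum (fun m : ℕ => Gamma (m + 1 / 2) / (√π * m.factorial) * z ^ (2 * m + 1) *
      exp (-((m + 1 / 2) * u))) (z * exp (-(u / 2)) / √(1 - z ^ 2 * exp (-u))) := by
  have hx : |z ^ 2 * exp (-u)| < 1 := by
    rw [abs_of_nonneg (by positivity)]
    calc z ^ 2 * exp (-u) ≤ z ^ 2 * 1 := by gcongr; exact exp_le_one_iff.2 (by linarith)
      _ < 1 := by rw [mul_one, ← sq_abs]; nlinarith [abs_nonneg z]
  have h := (hasSum_Gamma_add_half_mul_pow hx).mul_left (z * exp (-(u / 2)))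
  rw [← div_eq_mul_inv] at h
  refine h.congr_fun fun m => ?_
  rw [mul_pow, ← pow_mul, ← exp_nat_mul, pow_succ,
    show -((m + 1 / 2) * u) = -(u / 2) + m * -u by ring, exp_add]
  ring

theorem summable_Gamma_add_half_mul_pow_mul_rpow {z p : ℝ} (hz0 : 0 ≤ z) (hz1 : z < 1)
    (hp : 0 ≤ p) : Summable fun m : ℕ => Gamma (m + 1 / 2) / (√π * m.factorial) *
      z ^ (2 * m + 1) * (1 / ((m : ℝ) + 1 / 2)) ^ p := by
  have hsum := (hasSum_Gamma_add_half_mul_exp (abs_lt.2 ⟨by linarith, hz1⟩) le_rfl).summable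
  simp only [mul_zero, neg_zero, exp_zero, mul_one] at hsum
  refine (hsum.mul_right (2 ^ p)).of_nonneg_of_le (fun m => ?_) fun m => ?_
  all_goals have := Gamma_pos_of_pos (by positivity : (0 : ℝ) < m + 1 / 2)
  · positivity
  · gcongr
    rw [one_div_le (by positivity) two_pos]
    simp

theorem integrableOn_rpow_mul_exp_neg_mul_Ioi {p r : ℝ} (hp : 0 < p) (hr : 0 < r) :
    IntegrableOn (fun u : ℝ => u ^ (p - 1) * exp (-(r * u))) (Ioi 0) := by
  simpa only [rpow_one, neg_mul] using
    integrableOn_rpow_mul_exp_neg_mul_rpow (s := p - 1) (by linarith) one_pos hr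

theorem hasSum_integral_rpow_mul_tsum_exp {a r : ℕ → ℝ} {p : ℝ} (hp : 0 < p)
    (ha : ∀ m, 0 ≤ a m) (hr : ∀ m, 0 < r m) (hsum : Summable fun m => a m * (1 / r m) ^ p) :
    HasSum (fun m => a m * ((1 / r m) ^ p * Gamma p))
      (∫ u in Ioi 0, u ^ (p - 1) * ∑' m, a m * exp (-(r m * u))) := by
  set F : ℕ → ℝ → ℝ := fun m u => a m * (u ^ (p - 1) * exp (-(r m * u)))
  have hF_int (m : ℕ) : ∫ u in Ioi 0, F m u = a m * ((1 / r m) ^ p * Gamma p) := by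
    rw [integral_const_mul, integral_rpow_mul_exp_neg_mul_Ioi hp (hr m)]
  have hF_norm (m : ℕ) : ∫ u in Ioi 0, ‖F m u‖ = ∫ u in Ioi 0, F m u := by
    refine setIntegral_congr_fun measurableSet_Ioi fun u (hu : 0 < u) => ?_
    have := ha m
    exact norm_of_nonneg (by positivity)
  have h := hasSum_integral_of_summable_integral_norm (F := F) (μ := volume.restrict (Ioi 0))
    (fun m => (integrableOn_rpow_mul_exp_neg_mul_Ioi hp (hr m)).const_mul (a m))
    (by simp only [hF_norm, hF_int]; simpa only [mul_assoc] using hsum.mul_right (Gamma p))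
  simp only [hF_int] at h
  simpa only [F, mul_left_comm (a _), tsum_mul_left] using h

section ArcsinExp

variable {z : ℝ}

theorem neg_two_mul_log_sin_arcsin_mul_exp (hz0 : 0 < z) (hz1 : z ≤ 1) {u : ℝ} (hu : 0 ≤ u) :
    -2 * log (sin (2 * arcsin (z * exp (-(u / 2))) / 2) / z) = u := by
  have he : exp (-(u / 2)) ≤ 1 := exp_le_one_iff.2 (by linarith)
  rw [mul_div_cancel_left₀ _ two_ne_zero,
    sin_arcsin (by nlinarith [exp_pos (-(u / 2))]) (by nlinarith),
    mul_div_cancel_left₀ _ hz0.ne', log_exp]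
  ring

theorem image_two_mul_arcsin_mul_exp_Ioi (hz0 : 0 < z) (hz1 : z ≤ 1) :
    (fun u => 2 * arcsin (z * exp (-(u / 2)))) '' Ioi 0 = Ioo 0 (2 * arcsin z) := by
  ext θ
  constructor
  · rintro ⟨u, hu, rfl⟩
    have he : exp (-(u / 2)) < 1 := exp_lt_one_iff.2 (by linarith [mem_Ioi.1 hu])
    have hw0 : 0 < z * exp (-(u / 2)) := by positivity
    refine ⟨by linarith [arcsin_pos.2 hw0], ?_⟩
    have := strictMonoOn_arcsin ⟨by linarith, by nlinarith⟩ ⟨by linarith, hz1⟩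
      (show z * exp (-(u / 2)) < z by nlinarith)
    linarith
  · rintro ⟨hθ0, hθz⟩
    have hθπ : θ / 2 < π / 2 := by linarith [arcsin_le_pi_div_two z]
    have hsin0 : 0 < sin (θ / 2) := sin_pos_of_pos_of_lt_pi (by linarith) (by linarith)
    have hsinz : sin (θ / 2) < z :=
      (lt_arcsin_iff_sin_lt ⟨by linarith, hθπ.le⟩ ⟨by linarith, hz1⟩).1 (by linarith)
    refine ⟨-2 * log (sin (θ / 2) / z), ?_, ?_⟩
    · have := log_neg (div_pos hsin0 hz0) ((div_lt_one hz0).2 hsinz)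
      exact mem_Ioi.2 (by linarith)
    · dsimp only
      rw [show -(-2 * log (sin (θ / 2) / z) / 2) = log (sin (θ / 2) / z) by ring,
        exp_log (div_pos hsin0 hz0), mul_div_cancel₀ _ hz0.ne', arcsin_sin (by linarith) hθπ.le]
      ring

theorem hasDerivAt_two_mul_arcsin_mul_exp (hz0 : 0 < z) (hz1 : z ≤ 1) {u : ℝ} (hu : 0 < u) :
    HasDerivAt (fun u => 2 * arcsin (z * exp (-(u / 2))))
      (-(z * exp (-(u / 2)) / √(1 - z ^ 2 * exp (-u)))) u := by
  have he : exp (-(u / 2)) < 1 := exp_lt_one_iff.2 (by linarith)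
  have hw0 : 0 < z * exp (-(u / 2)) := by positivity
  have hinner : HasDerivAt (fun u => z * exp (-(u / 2))) (z * exp (-(u / 2)) * (-(1 / 2))) u :=
    by simpa [mul_assoc] using (((hasDerivAt_id u).div_const 2).neg.exp).const_mul z
  have hsq : (z * exp (-(u / 2))) ^ 2 = z ^ 2 * exp (-u) := by
    rw [mul_pow, ← exp_nat_mul]; push_cast; ring_nf
  have harcsin := ((hasDerivAt_arcsin (by linarith) (by nlinarith)).comp u hinner).const_mul 2
  refine harcsin.congr_deriv ?_
  rw [hsq]
  ring

end ArcsinExp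

theorem integral_comp_neg_two_mul_log_sin_div_sin {E : Type*} [NormedAddCommGroup E]
    [NormedSpace ℝ E] {σ : ℝ} (hσ0 : 0 < σ) (hσπ : σ < π) (f : ℝ → E) :
    ∫ θ in (0 : ℝ)..σ, f (-2 * log (sin (θ / 2) / sin (σ / 2))) =
      ∫ u in Ioi 0,
        (sin (σ / 2) * exp (-(u / 2)) / √(1 - sin (σ / 2) ^ 2 * exp (-u))) • f u := by
  set z := sin (σ / 2)
  have hz0 : 0 < z := sin_pos_of_pos_of_lt_pi (by linarith) (by linarith)
  have hz1 : z ≤ 1 := sin_le_one _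
  have hσ : σ = 2 * arcsin z := by rw [arcsin_sin (by linarith) (by linarith)]; ring
  rw [intervalIntegral.integral_of_le hσ0.le, integral_Ioc_eq_integral_Ioo, hσ,
    ← image_two_mul_arcsin_mul_exp_Ioi hz0 hz1,
    integral_image_eq_integral_abs_deriv_smul measurableSet_Ioi
      (fun u hu => (hasDerivAt_two_mul_arcsin_mul_exp hz0 hz1 hu).hasDerivWithinAt)]
  · refine setIntegral_congr_fun measurableSet_Ioi fun u (hu : 0 < u) => ?_
    rw [neg_two_mul_log_sin_arcsin_mul_exp hz0 hz1 hu.le, abs_neg, abs_of_nonneg (by positivity)]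
  · intro a ha b hb hab
    dsimp only at hab
    rw [← neg_two_mul_log_sin_arcsin_mul_exp hz0 hz1 (le_of_lt ha),
      ← neg_two_mul_log_sin_arcsin_mul_exp hz0 hz1 (le_of_lt hb), hab]

theorem two_mul_pow_div_halfBinom_mul_rpow (m : ℕ) (z : ℝ) {s : ℝ} (hs : 1 < s) :
    (2 * z) ^ (2 * m + 1) / (halfBinom m * ((m : ℝ) + 1 / 2) ^ s) =
      π / Gamma (s - 1) * (Gamma (m + 1 / 2) / (√π * m.factorial) * z ^ (2 * m + 1) *
        ((1 / ((m : ℝ) + 1 / 2)) ^ (s - 1) * Gamma (s - 1))) := by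
  have hm : (0 : ℝ) < m + 1 / 2 := by positivity
  have hΓ : 0 < Gamma (s - 1) := Gamma_pos_of_pos (by linarith)
  have hΓm : 0 < Gamma (m + 1 / 2) := Gamma_pos_of_pos hm
  have hπ : √π ^ 2 = π := sq_sqrt pi_pos.le
  have : 0 < √π := by positivity
  have : 0 < ((m : ℝ) + 1 / 2) ^ s := by positivity
  rw [halfBinom_eq, mul_pow, one_div ((m : ℝ) + 1 / 2), inv_rpow hm.le, rpow_sub_one hm.ne']
  field_simp
  rw [hπ]

open Real in
theorem etaCB_log_sine_integral (σ s : ℝ) (hσ0 : 0 < σ) (hσπ : σ < π) (hs : 1 < s) :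
    ∑' m : ℕ, (2 * Real.sin (σ / 2)) ^ (2 * m + 1) /
        (halfBinom m * ((m : ℝ) + 1 / 2) ^ s) =
      (π / Real.Gamma (s - 1)) *
        ∫ θ in (0 : ℝ)..σ,
          (-2 * Real.log (Real.sin (θ / 2) / Real.sin (σ / 2))) ^ (s - 2) := by
  set z := sin (σ / 2)
  have hz0 : 0 < z := sin_pos_of_pos_of_lt_pi (by linarith) (by linarith)
  have hz1 : z < 1 := by
    simpa using sin_lt_sin_of_lt_of_le_pi_div_two (x := σ / 2) (by linarith) le_rfl (by linarith)
  have hmellin := hasSum_integral_rpow_mul_tsum_exp (p := s - 1) (by linarith)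
    (fun m => by have := Gamma_pos_of_pos (by positivity : (0 : ℝ) < m + 1 / 2); positivity)
    (fun m => by positivity) (summable_Gamma_add_half_mul_pow_mul_rpow hz0.le hz1 (by linarith))
  calc _ = ∑' m : ℕ, π / Gamma (s - 1) * (Gamma (m + 1 / 2) / (√π * m.factorial) *
          z ^ (2 * m + 1) * ((1 / ((m : ℝ) + 1 / 2)) ^ (s - 1) * Gamma (s - 1))) :=
        tsum_congr fun m => two_mul_pow_div_halfBinom_mul_rpow m z hs
    _ = π / Gamma (s - 1) *
          ∫ u in Ioi 0, (z * exp (-(u / 2)) / √(1 - z ^ 2 * exp (-u))) • u ^ (s - 2) := by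
        rw [tsum_mul_left, hmellin.tsum_eq, sub_sub, one_add_one_eq_two]
        congr 1
        refine setIntegral_congr_fun measurableSet_Ioi fun u (hu : 0 < u) => ?_
        rw [(hasSum_Gamma_add_half_mul_exp (abs_lt.2 ⟨by linarith, hz1⟩) hu.le).tsum_eq,
          smul_eq_mul, mul_comm]
    _ = _ := by rw [integral_comp_neg_two_mul_log_sin_div_sin hσ0 hσπ (· ^ (s - 2))]
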